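/- Let Γ1 be a set of formulas and Γ2 = Γ1 ∪ {u1 = u'1, u2 = u'2, u3 = u'3}, where for i = 1, 2, 3 the variable Var(u'_i) of u'_i does not occur in Γ1, u1, u2, u3, t, t', and Var(u'_1), Var(u'_2), Var(u'_3) are pairwise distinct variables. Then t ≡_{Γ2} t' implies t ≡_{Γ1} t'. -/

import Mathlib

namespace CLKID

/-- Terms of the language: variables, the constant `0`, and the unary function `s`. -/
inductive Tm : Type where
  | var : ℕ → Tm
  | zero : Tm
  | s : Tm → Tm
deriving DecidableEq

/-- `sIter n t` is the term `s^n t`. -/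
def sIter : ℕ → Tm → Tm
  | 0, t => t
  | n + 1, t => Tm.s (sIter n t)

/-- Substitution on terms. -/
def Tm.subst (θ : ℕ → Tm) : Tm → Tm
  | .var x => θ x
  | .zero => .zero
  | .s t => .s (t.subst θ)

/-- Free variables of a term. -/
def Tm.fv : Tm → Set ℕ
  | .var x => {x}
  | .zero => ∅
  | .s t => t.fv

/-- Subterms of a term. -/
def Tm.sub : Tm → Set Tm
  | .var x => {Tm.var x}
  | .zero => {Tm.zero}
  | .s t => insert (Tm.s t) t.sub

/-- The variable of a term (`none` if the term is of the form `s^n 0`). -/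
def Tm.varOf : Tm → Option ℕ
  | .var x => some x
  | .zero => none
  | .s t => t.varOf

/-- Formulas: equations, the two inductive-predicate atoms `Add1`/`Add2`,
    and the usual first-order connectives and quantifiers. -/
inductive Fm : Type where
  | eq : Tm → Tm → Fm
  | add1 : Tm → Tm → Tm → Fm
  | add2 : Tm → Tm → Tm → Fm
  | not : Fm → Fm
  | and : Fm → Fm → Fm
  | or : Fm → Fm → Fm
  | imp : Fm → Fm → Fm
  | all : ℕ → Fm → Fm
  | ex : ℕ → Fm → Fm
deriving DecidableEq

/-- Substitution on formulas. -/
def Fm.subst (θ : ℕ → Tm) : Fm → Fm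
  | .eq t u => .eq (t.subst θ) (u.subst θ)
  | .add1 a b c => .add1 (a.subst θ) (b.subst θ) (c.subst θ)
  | .add2 a b c => .add2 (a.subst θ) (b.subst θ) (c.subst θ)
  | .not φ => .not (φ.subst θ)
  | .and φ ψ => .and (φ.subst θ) (ψ.subst θ)
  | .or φ ψ => .or (φ.subst θ) (ψ.subst θ)
  | .imp φ ψ => .imp (φ.subst θ) (ψ.subst θ)
  | .all x φ => .all x (φ.subst (Function.update θ x (Tm.var x)))
  | .ex x φ => .ex x (φ.subst (Function.update θ x (Tm.var x)))

/-- Free variables of a formula. -/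
def Fm.fv : Fm → Set ℕ
  | .eq t u => t.fv ∪ u.fv
  | .add1 a b c => a.fv ∪ b.fv ∪ c.fv
  | .add2 a b c => a.fv ∪ b.fv ∪ c.fv
  | .not φ => φ.fv
  | .and φ ψ => φ.fv ∪ ψ.fv
  | .or φ ψ => φ.fv ∪ ψ.fv
  | .imp φ ψ => φ.fv ∪ ψ.fv
  | .all x φ => φ.fv \ {x}
  | .ex x φ => φ.fv \ {x}

/-- Terms occurring in a formula. -/
def Fm.tms : Fm → Set Tm
  | .eq t u => t.sub ∪ u.sub
  | .add1 a b c => a.sub ∪ b.sub ∪ c.sub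
  | .add2 a b c => a.sub ∪ b.sub ∪ c.sub
  | .not φ => φ.tms
  | .and φ ψ => φ.tms ∪ ψ.tms
  | .or φ ψ => φ.tms ∪ ψ.tms
  | .imp φ ψ => φ.tms ∪ ψ.tms
  | .all _ φ => φ.tms
  | .ex _ φ => φ.tms

/-- The substitution `[x := t]`. -/
def sub1 (x : ℕ) (t : Tm) : ℕ → Tm := fun y => if y = x then t else Tm.var y

/-- The simultaneous substitution `[v1 := t, v2 := u]`. -/
def sub2 (v1 v2 : ℕ) (t u : Tm) : ℕ → Tm :=
  fun z => if z = v1 then t else if z = v2 then u else Tm.var z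

/-- `≡_Γ`: the smallest congruence relation on terms containing all pairs `(t, u)`
    with the equation `t = u` in `Γ`. -/
inductive EqvTm (Γ : Set Fm) : Tm → Tm → Prop where
  | base {t u : Tm} : Fm.eq t u ∈ Γ → EqvTm Γ t u
  | refl (t : Tm) : EqvTm Γ t t
  | symm {t u : Tm} : EqvTm Γ t u → EqvTm Γ u t
  | trans {t u v : Tm} : EqvTm Γ t u → EqvTm Γ u v → EqvTm Γ t v
  | sCongr {t u : Tm} : EqvTm Γ t u → EqvTm Γ (Tm.s t) (Tm.s u)

/-- `t ~_Γ u` : `s^n t ≡_Γ s^m u` for some naturals `n`, `m`. -/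
def DepTm (Γ : Set Fm) (t u : Tm) : Prop := ∃ n m : ℕ, EqvTm Γ (sIter n t) (sIter m u)

/-- A sequent: a pair of finite sets of formulas. -/
structure Seq where
  ant : Finset Fm
  suc : Finset Fm

/-- The antecedent of a sequent, as a set of formulas. -/
def antSet (S : Seq) : Set Fm := ↑S.ant

/-- `[Γ]` from Lemma on chains: `{ s^n t1 = s^n t2 | t1 = t2 ∈ Γ or t2 = t1 ∈ Γ }`. -/
def brkt (Γ : Set Fm) : Set Fm :=
  {φ | ∃ (n : ℕ) (t1 t2 : Tm), φ = Fm.eq (sIter n t1) (sIter n t2) ∧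
        (Fm.eq t1 t2 ∈ Γ ∨ Fm.eq t2 t1 ∈ Γ)}

/-- `B1(Γ ⊢ Δ)` : second arguments of `Add1` atoms in the consequent. -/
def B1 (S : Seq) : Set Tm := {b | ∃ a c, Fm.add1 a b c ∈ S.suc}

/-- `C(Γ ⊢ Δ)` : third arguments of `Add2` atoms in the antecedent
    or `Add1` atoms in the consequent. -/
def Cset (S : Seq) : Set Tm :=
  {c | (∃ a b, Fm.add2 a b c ∈ S.ant) ∨ (∃ a b, Fm.add1 a b c ∈ S.suc)}

/-- Index sequent. -/
def IndexSequent (S : Seq) : Prop :=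
  (∀ t ∈ B1 S, ∀ u ∈ Cset S, ¬ DepTm (antSet S) t u) ∧
  (∀ b ∈ B1 S, ∀ b' ∈ B1 S, ∀ n m : ℕ, EqvTm (antSet S) (sIter n b) (sIter m b') → n = m)

/-! The three equations can be removed one at a time, since each new variable is also fresh for
the other two equations. For a single equation `u = s^k w` with `w` fresh, collapse every term
`s^n w` with `n ≥ k` to `s^(n-k) u` and leave the remaining terms `s^n w`, `n < k`, alone: the
relation "equal, or both collapsible with `≡_Γ`-equivalent collapses" is a congruence containing
`Γ ∪ {u = s^k w}`, and on terms without `w` it is `≡_Γ`. -/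

def Tm.sCount : Tm → ℕ
  | .s t => t.sCount + 1
  | _ => 0

lemma Tm.mem_fv_iff_varOf {t : Tm} {w : ℕ} : w ∈ t.fv ↔ t.varOf = some w := by
  induction t with
  | var x => simp [Tm.fv, Tm.varOf, eq_comm]
  | zero => simp [Tm.fv, Tm.varOf]
  | s t ih => exact ih

lemma Tm.notMem_fv_of_varOf {t : Tm} {v w : ℕ} (ht : t.varOf = some v) (hw : w ≠ v) :
    w ∉ t.fv := by
  rw [Tm.mem_fv_iff_varOf, ht]
  exact fun h => hw (Option.some.inj h).symm

lemma notMem_fv_insert_eq {Γ : Set Fm} {w : ℕ} {a b : Tm} (hΓ : ∀ φ ∈ Γ, w ∉ φ.fv)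
    (ha : w ∉ a.fv) (hb : w ∉ b.fv) : ∀ φ ∈ insert (Fm.eq a b) Γ, w ∉ φ.fv := by
  rintro φ (rfl | hφ)
  · simp [Fm.fv, ha, hb]
  · exact hΓ φ hφ

theorem EqvTm.of_congruence {Γ : Set Fm} {r : Tm → Tm → Prop} (hr : Equivalence r)
    (hs : ∀ {a b}, r a b → r (Tm.s a) (Tm.s b)) (hΓ : ∀ {a b}, Fm.eq a b ∈ Γ → r a b)
    {t u : Tm} (h : EqvTm Γ t u) : r t u := by
  induction h with
  | base hm => exact hΓ hm
  | refl t => exact hr.refl t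
  | symm _ ih => exact hr.symm ih
  | trans _ _ ih₁ ih₂ => exact hr.trans ih₁ ih₂
  | sCongr _ ih => exact hs ih

section Collapse

variable (Γ : Set Fm) (w k : ℕ) (u : Tm)

def IsBelow (t : Tm) : Prop := t.varOf = some w ∧ t.sCount < k

def collapse (t : Tm) : Tm := if t.varOf = some w then sIter (t.sCount - k) u else t

def CollapseRel (a b : Tm) : Prop :=
  a = b ∨ ¬IsBelow w k a ∧ ¬IsBelow w k b ∧ EqvTm Γ (collapse w k u a) (collapse w k u b)

variable {Γ w k u}

lemma not_isBelow_s {t : Tm} (ht : ¬IsBelow w k t) : ¬IsBelow w k (Tm.s t) :=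
  fun ⟨hv, hlt⟩ => ht ⟨hv, Nat.lt_of_succ_lt hlt⟩

lemma collapse_s {t : Tm} (ht : ¬IsBelow w k t) :
    collapse w k u (Tm.s t) = Tm.s (collapse w k u t) := by
  by_cases hv : t.varOf = some w
  · have hk : k ≤ t.sCount := not_lt.1 fun hlt => ht ⟨hv, hlt⟩
    simp only [collapse, Tm.varOf, Tm.sCount, if_pos hv, Nat.sub_add_comm hk, sIter]
  · simp only [collapse, Tm.varOf, hv, if_false]

lemma not_isBelow_of_notMem_fv {t : Tm} (ht : w ∉ t.fv) : ¬IsBelow w k t :=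
  fun h => ht (Tm.mem_fv_iff_varOf.2 h.1)

lemma collapse_of_notMem_fv {t : Tm} (ht : w ∉ t.fv) : collapse w k u t = t :=
  if_neg (mt Tm.mem_fv_iff_varOf.2 ht)

lemma collapseRel_equivalence : Equivalence (CollapseRel Γ w k u) where
  refl _ := Or.inl rfl
  symm
    | .inl h => .inl h.symm
    | .inr ⟨ha, hb, h⟩ => .inr ⟨hb, ha, h.symm⟩
  trans
    | .inl rfl, h => h
    | h, .inl rfl => h
    | .inr ⟨ha, _, h₁⟩, .inr ⟨_, hc, h₂⟩ => .inr ⟨ha, hc, h₁.trans h₂⟩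

lemma collapseRel_s {a b : Tm} (h : CollapseRel Γ w k u a b) :
    CollapseRel Γ w k u (Tm.s a) (Tm.s b) := by
  rcases h with rfl | ⟨ha, hb, h⟩
  · exact Or.inl rfl
  · refine Or.inr ⟨not_isBelow_s ha, not_isBelow_s hb, ?_⟩
    rw [collapse_s ha, collapse_s hb]
    exact h.sCongr

end Collapse

theorem EqvTm.of_insert_fresh {Γ : Set Fm} {u u' t t' : Tm} {w : ℕ} (hu' : u'.varOf = some w)
    (hΓ : ∀ φ ∈ Γ, w ∉ φ.fv) (hu : w ∉ u.fv) (ht : w ∉ t.fv) (ht' : w ∉ t'.fv)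
    (h : EqvTm (insert (Fm.eq u u') Γ) t t') : EqvTm Γ t t' := by
  have hr : CollapseRel Γ w u'.sCount u t t' := by
    refine h.of_congruence collapseRel_equivalence collapseRel_s ?_
    rintro a b (hab | hab)
    · obtain ⟨rfl, rfl⟩ := Fm.eq.inj hab
      refine Or.inr ⟨not_isBelow_of_notMem_fv hu, fun hb => lt_irrefl _ hb.2, ?_⟩
      rw [collapse_of_notMem_fv hu, collapse, if_pos hu', Nat.sub_self]
      exact .refl _
    · have hab' : w ∉ a.fv ∧ w ∉ b.fv := by simpa [Fm.fv, not_or] using hΓ _ hab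
      refine Or.inr ⟨not_isBelow_of_notMem_fv hab'.1, not_isBelow_of_notMem_fv hab'.2, ?_⟩
      rw [collapse_of_notMem_fv hab'.1, collapse_of_notMem_fv hab'.2]
      exact .base hab
  rcases hr with rfl | ⟨-, -, hr⟩
  · exact .refl t
  · rwa [collapse_of_notMem_fv ht, collapse_of_notMem_fv ht'] at hr

/-- Adding equations `u_i = u'_i` whose right-hand sides are
    built on fresh, pairwise distinct variables does not create new equalities
    between old terms. -/
theorem eqv_right_asp (Γ1 : Set Fm) (u1 u2 u3 u1' u2' u3' t t' : Tm) (w1 w2 w3 : ℕ)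
    (h1 : u1'.varOf = some w1) (h2 : u2'.varOf = some w2) (h3 : u3'.varOf = some w3)
    (hd12 : w1 ≠ w2) (hd13 : w1 ≠ w3) (hd23 : w2 ≠ w3)
    (hfresh : ∀ w ∈ ({w1, w2, w3} : Set ℕ),
      (∀ φ ∈ Γ1, w ∉ Fm.fv φ) ∧
      w ∉ u1.fv ∧ w ∉ u2.fv ∧ w ∉ u3.fv ∧ w ∉ t.fv ∧ w ∉ t'.fv)
    (h : EqvTm (Γ1 ∪ {Fm.eq u1 u1', Fm.eq u2 u2', Fm.eq u3 u3'}) t t') :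
    EqvTm Γ1 t t' := by
  obtain ⟨hΓ₁, hu₁₁, hu₂₁, hu₃₁, ht₁, ht₁'⟩ := hfresh w1 (by simp)
  obtain ⟨hΓ₂, -, hu₂₂, hu₃₂, ht₂, ht₂'⟩ := hfresh w2 (by simp)
  obtain ⟨hΓ₃, -, -, hu₃₃, ht₃, ht₃'⟩ := hfresh w3 (by simp)
  rw [Set.union_insert, Set.union_insert, Set.union_singleton] at h
  have hΓ₁' := notMem_fv_insert_eq (notMem_fv_insert_eq hΓ₁ hu₃₁ (Tm.notMem_fv_of_varOf h3 hd13))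
    hu₂₁ (Tm.notMem_fv_of_varOf h2 hd12)
  have hΓ₂' := notMem_fv_insert_eq hΓ₂ hu₃₂ (Tm.notMem_fv_of_varOf h3 hd23)
  have h₂₃ := h.of_insert_fresh h1 hΓ₁' hu₁₁ ht₁ ht₁'
  have h₃ := h₂₃.of_insert_fresh h2 hΓ₂' hu₂₂ ht₂ ht₂'
  exact h₃.of_insert_fresh h3 hΓ₃ hu₃₃ ht₃ ht₃'

end CLKID
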